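/- Let E be a field and let u, v ∈ E[X] be polynomials with u(0) ≠ 0 and v(0) ≠ 0. Let a, b, r, s be positive integers with s·b - r·a = 1. Let z be a variable, E[[z]] the ring of formal power series in z over E, and E((z)) its quotient field of formal Laurent series. Then the polynomial H(X) = X^a · u(X z^r) - z · v(z^s) ∈ E[[z]][X] factors as H = A·U in E[[z]][X], where A is a monic polynomial of degree a with A(X) ≡ X^a (mod z) whose constant term is divisible by z but not by z^2; in particular A is an Eisenstein polynomial with respect to z and hence irreducible of degree a over E((z)). -/

import Mathlib

open Polynomial


noncomputable section

namespace HenselFactorAux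

variable {E : Type*} [Field E]

/-- The natural injection `E[[z]][X] → (E[X])[[z]]`. -/
def phi (E : Type*) [CommSemiring E] :
    Polynomial (PowerSeries E) →+* PowerSeries (Polynomial E) :=
  Polynomial.eval₂RingHom (PowerSeries.map Polynomial.C)
    (PowerSeries.C (R := (Polynomial E)) Polynomial.X)

lemma phi_coeff (p : Polynomial (PowerSeries E)) (n k : ℕ) :
    (PowerSeries.coeff (R := (Polynomial E)) n (phi E p)).coeff k
      = PowerSeries.coeff (R := E) n (p.coeff k) := by
  induction p using Polynomial.induction_on' with
  | add p q hp hq => simp [hp, hq]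
  | monomial d s =>
      rw [phi, coe_eval₂RingHom, eval₂_monomial, ← map_pow, mul_comm,
        PowerSeries.coeff_C_mul, PowerSeries.coeff_map,
        mul_comm (Polynomial.X ^ d), Polynomial.C_mul_X_pow_eq_monomial,
        Polynomial.coeff_monomial, Polynomial.coeff_monomial,
        apply_ite (PowerSeries.coeff (R := E) n), map_zero]

lemma phi_injective : Function.Injective (phi E) := fun p q hpq =>
  Polynomial.ext fun k => PowerSeries.ext fun n => by
    rw [← phi_coeff, ← phi_coeff, hpq]

/-- The sequence of `z`-adic coefficients of the factors `A` (first component) and `U`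
(second component) in the Hensel factorization, constructed recursively. -/
def AUseq (c : E) (a : ℕ) (h : ℕ → Polynomial E) : ℕ → Polynomial E × Polynomial E
  | 0 => (Polynomial.X ^ a, Polynomial.C c)
  | (n + 1) =>
      (c⁻¹ • ((h (n + 1) - ∑ i ∈ (Finset.range n).attach,
          (AUseq c a h (i.1 + 1)).1 * (AUseq c a h (n - i.1)).2) %ₘ Polynomial.X ^ a),
       (h (n + 1) - ∑ i ∈ (Finset.range n).attach,
          (AUseq c a h (i.1 + 1)).1 * (AUseq c a h (n - i.1)).2) /ₘ Polynomial.X ^ a)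
  termination_by n => n
  decreasing_by
    all_goals (have := Finset.mem_range.mp i.2; omega)

variable (c : E) (a : ℕ) (h : ℕ → Polynomial E)

lemma AUseq_zero : AUseq c a h 0 = (Polynomial.X ^ a, Polynomial.C c) := by
  simp [AUseq]

/-- The remainder used at step `n+1`. -/
def Rseq (n : ℕ) : Polynomial E :=
  h (n + 1) - ∑ i ∈ Finset.range n, (AUseq c a h (i + 1)).1 * (AUseq c a h (n - i)).2

lemma AUseq_succ (n : ℕ) :
    AUseq c a h (n + 1) =
      (c⁻¹ • (Rseq c a h n %ₘ Polynomial.X ^ a), Rseq c a h n /ₘ Polynomial.X ^ a) := by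
  rw [AUseq, Rseq,
    Finset.sum_attach (Finset.range n)
      (fun i => (AUseq c a h (i + 1)).1 * (AUseq c a h (n - i)).2)]

lemma Aseq_coeff_eq_zero {n j : ℕ} (hn : n ≠ 0) (hj : a ≤ j) :
    ((AUseq c a h n).1).coeff j = 0 := by
  obtain ⟨m, rfl⟩ := Nat.exists_eq_succ_of_ne_zero hn
  rw [AUseq_succ]
  simp only [Polynomial.coeff_smul]
  rw [Polynomial.coeff_eq_zero_of_degree_lt, smul_zero]
  refine lt_of_lt_of_le (Polynomial.degree_modByMonic_lt _ (Polynomial.monic_X_pow a)) ?_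
  rw [Polynomial.degree_X_pow]
  exact_mod_cast hj

lemma Aseq_natDegree_le (n : ℕ) : ((AUseq c a h n).1).natDegree ≤ a := by
  cases n with
  | zero => rw [AUseq_zero]; simp
  | succ m =>
      rw [Polynomial.natDegree_le_iff_coeff_eq_zero]
      intro N hN
      exact Aseq_coeff_eq_zero c a h (Nat.succ_ne_zero m) hN.le

lemma Useq_natDegree_le (D : ℕ) (hD : ∀ n, (h n).natDegree ≤ a + D) (n : ℕ) :
    ((AUseq c a h n).2).natDegree ≤ D := by
  induction n using Nat.strong_induction_on with
  | _ n ih =>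
    match n with
    | 0 => rw [AUseq_zero]; simp
    | (m + 1) =>
        rw [AUseq_succ]
        have hR : (Rseq c a h m).natDegree ≤ a + D := by
          refine le_trans (Polynomial.natDegree_sub_le _ _) (max_le (hD _) ?_)
          refine Polynomial.natDegree_sum_le_of_forall_le _ _ fun i hi => ?_
          refine le_trans Polynomial.natDegree_mul_le ?_
          exact add_le_add (Aseq_natDegree_le c a h _) (ih (m - i) (by omega))
        show ((Rseq c a h m) /ₘ Polynomial.X ^ a).natDegree ≤ D
        rw [Polynomial.natDegree_divByMonic _ (Polynomial.monic_X_pow a),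
          Polynomial.natDegree_X_pow]
        omega

lemma h_eq_sum (hc : c ≠ 0) (n : ℕ) :
    h (n + 1) = ∑ p ∈ Finset.HasAntidiagonal.antidiagonal (n + 1),
      (AUseq c a h p.1).1 * (AUseq c a h p.2).2 := by
  rw [Finset.Nat.sum_antidiagonal_eq_sum_range_succ_mk, Finset.sum_range_succ',
    Finset.sum_range_succ]
  have e1 : ∀ k ∈ Finset.range n,
      (AUseq c a h (k + 1)).1 * (AUseq c a h (n + 1 - (k + 1))).2
        = (AUseq c a h (k + 1)).1 * (AUseq c a h (n - k)).2 := by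
    intro k _
    have : n + 1 - (k + 1) = n - k := by omega
    rw [this]
  rw [Finset.sum_congr rfl e1]
  have e2 : n + 1 - (n + 1) = 0 := by omega
  have e3 : n + 1 - 0 = n + 1 := by omega
  rw [e2, e3, AUseq_zero, AUseq_succ]
  have hmul : (c⁻¹ • (Rseq c a h n %ₘ Polynomial.X ^ a)) * Polynomial.C c
      = Rseq c a h n %ₘ Polynomial.X ^ a := by
    rw [mul_comm, ← Polynomial.smul_eq_C_mul, smul_smul, mul_inv_cancel₀ hc, one_smul]
  have hdm : Rseq c a h n %ₘ Polynomial.X ^ a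
      + Polynomial.X ^ a * (Rseq c a h n /ₘ Polynomial.X ^ a) = Rseq c a h n :=
    Polynomial.modByMonic_add_div _ (Polynomial.X ^ a)
  simp only [hmul]
  rw [add_assoc, hdm, Rseq]
  ring



lemma mkA_eq_zero {k : ℕ} (hk : a < k) :
    (PowerSeries.mk fun n => ((AUseq c a h n).1).coeff k) = 0 := by
  ext n
  rw [PowerSeries.coeff_mk, map_zero]
  cases n with
  | zero => rw [AUseq_zero]; simp [Polynomial.coeff_X_pow, (Nat.ne_of_gt hk)]
  | succ m => exact Aseq_coeff_eq_zero c a h (Nat.succ_ne_zero m) hk.le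

theorem exists_factor (hc : c ≠ 0) (D : ℕ) (ha : 0 < a)
    (hD : ∀ n, (h n).natDegree ≤ a + D)
    (h0 : h 0 = Polynomial.C c * Polynomial.X ^ a) :
    ∃ A U : Polynomial (PowerSeries E),
      phi E (A * U) = PowerSeries.mk h ∧
      A.Monic ∧ A.natDegree = a ∧
      (∀ i, i < a → PowerSeries.constantCoeff (R := E) (A.coeff i) = 0) ∧
      PowerSeries.coeff (R := E) 1 (A.coeff 0) = c⁻¹ * (h 1).coeff 0 := by
  set A : Polynomial (PowerSeries E) :=
    ∑ i ∈ Finset.range (a + 1),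
      Polynomial.C (PowerSeries.mk fun n => ((AUseq c a h n).1).coeff i) * Polynomial.X ^ i
    with hAdef
  set U : Polynomial (PowerSeries E) :=
    ∑ j ∈ Finset.range (D + 1),
      Polynomial.C (PowerSeries.mk fun n => ((AUseq c a h n).2).coeff j) * Polynomial.X ^ j
    with hUdef
  have hAco : ∀ k, A.coeff k = PowerSeries.mk fun n => ((AUseq c a h n).1).coeff k := by
    intro k
    rw [hAdef, Polynomial.finset_sum_coeff]
    simp only [Polynomial.coeff_C_mul, Polynomial.coeff_X_pow, mul_ite, mul_one, mul_zero]
    have : ∀ i ∈ Finset.range (a + 1),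
        (if k = i then (PowerSeries.mk fun n => ((AUseq c a h n).1).coeff i) else 0)
          = (if i = k then (PowerSeries.mk fun n => ((AUseq c a h n).1).coeff i) else 0) := by
      intro i _
      by_cases hik : i = k
      · subst hik; simp
      · rw [if_neg (Ne.symm hik), if_neg hik]
    rw [Finset.sum_congr rfl this, Finset.sum_ite_eq' (Finset.range (a + 1)) k]
    by_cases hk : k ∈ Finset.range (a + 1)
    · rw [if_pos hk]
    · rw [if_neg hk, mkA_eq_zero c a h (by simpa using Finset.mem_range.not.mp hk)]
  have hUco : ∀ k, U.coeff k = PowerSeries.mk fun n => ((AUseq c a h n).2).coeff k := by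
    intro k
    rw [hUdef, Polynomial.finset_sum_coeff]
    simp only [Polynomial.coeff_C_mul, Polynomial.coeff_X_pow, mul_ite, mul_one, mul_zero]
    have : ∀ i ∈ Finset.range (D + 1),
        (if k = i then (PowerSeries.mk fun n => ((AUseq c a h n).2).coeff i) else 0)
          = (if i = k then (PowerSeries.mk fun n => ((AUseq c a h n).2).coeff i) else 0) := by
      intro i _
      by_cases hik : i = k
      · subst hik; simp
      · rw [if_neg (Ne.symm hik), if_neg hik]
    rw [Finset.sum_congr rfl this, Finset.sum_ite_eq' (Finset.range (D + 1)) k]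
    by_cases hk : k ∈ Finset.range (D + 1)
    · rw [if_pos hk]
    · rw [if_neg hk]
      have hk' : D < k := by simpa using Finset.mem_range.not.mp hk
      symm
      ext n
      rw [PowerSeries.coeff_mk, map_zero]
      exact Polynomial.coeff_eq_zero_of_natDegree_lt
        (lt_of_le_of_lt (Useq_natDegree_le c a h D hD n) hk')
  have hphiA : phi E A = PowerSeries.mk fun n => (AUseq c a h n).1 :=
    PowerSeries.ext fun n => Polynomial.ext fun k => by
      rw [phi_coeff, hAco, PowerSeries.coeff_mk, PowerSeries.coeff_mk]
  have hphiU : phi E U = PowerSeries.mk fun n => (AUseq c a h n).2 :=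
    PowerSeries.ext fun n => Polynomial.ext fun k => by
      rw [phi_coeff, hUco, PowerSeries.coeff_mk, PowerSeries.coeff_mk]
  have hAa : A.coeff a = 1 := by
    rw [hAco]
    ext n
    rw [PowerSeries.coeff_mk, PowerSeries.coeff_one]
    cases n with
    | zero => rw [AUseq_zero]; simp
    | succ m => rw [Aseq_coeff_eq_zero c a h (Nat.succ_ne_zero m) le_rfl]; simp
  have hdegle : A.natDegree ≤ a :=
    Polynomial.natDegree_le_iff_coeff_eq_zero.mpr fun N hN => by
      rw [hAco]; exact mkA_eq_zero c a h hN
  have hdeg : A.natDegree = a :=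
    le_antisymm hdegle (Polynomial.le_natDegree_of_ne_zero (by rw [hAa]; exact one_ne_zero))
  have hmonic : A.Monic := by
    rw [Polynomial.Monic, Polynomial.leadingCoeff, hdeg, hAa]
  refine ⟨A, U, ?_, hmonic, hdeg, ?_, ?_⟩
  · rw [map_mul, hphiA, hphiU]
    apply PowerSeries.ext
    intro n
    rw [PowerSeries.coeff_mul, PowerSeries.coeff_mk]
    simp only [PowerSeries.coeff_mk]
    cases n with
    | zero =>
        rw [Finset.Nat.antidiagonal_zero, Finset.sum_singleton, AUseq_zero, h0]
        exact mul_comm _ _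
    | succ m => exact (h_eq_sum c a h hc m).symm
  · intro i hi
    rw [hAco, PowerSeries.constantCoeff_mk, AUseq_zero]
    simp [Polynomial.coeff_X_pow, Nat.ne_of_lt hi]
  · rw [hAco, PowerSeries.coeff_mk, show (1 : ℕ) = 0 + 1 from rfl, AUseq_succ]
    have hR : Rseq c a h 0 = h (0 + 1) := by rw [Rseq]; simp
    have key : (h (0 + 1) %ₘ Polynomial.X ^ a).coeff 0 = (h (0 + 1)).coeff 0 := by
      conv_rhs => rw [← Polynomial.modByMonic_add_div (h (0 + 1)) (Polynomial.X ^ a)]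
      rw [Polynomial.coeff_add, Polynomial.mul_coeff_zero, Polynomial.coeff_X_pow,
        if_neg (by omega : ¬ (0 = a)), zero_mul, add_zero]
    rw [Polynomial.coeff_smul, hR, key, smul_eq_mul]
end HenselFactorAux

open HenselFactorAux

/-- Let `E` be a field, `u, v ∈ E[X]` with `u(0) ≠ 0` and `v(0) ≠ 0`, and `a, b, r, s`
positive integers with `s·b - r·a = 1`.  Then `H(X) = X^a · u(X z^r) - z · v(z^s)` over the
power series ring `E[[z]]` factors as `H = A · U`, where `A` is monic of degree `a`,
congruent to `X^a` modulo `z`, with constant term divisible by `z` but not by `z²`; in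
particular `A` is Eisenstein with respect to `(z)` and irreducible of degree `a` over the
Laurent series field `E((z))`. -/
theorem hensel_factor_eisenstein
    {E : Type*} [Field E] (u v : Polynomial E) (hu : u.eval 0 ≠ 0) (hv : v.eval 0 ≠ 0)
    (a b r s : ℕ) (ha : 0 < a) (hb : 0 < b) (hr : 0 < r) (hs : 0 < s)
    (hsbra : s * b = r * a + 1)
    (H : Polynomial (PowerSeries E))
    (hH : H = X ^ a * (u.map (PowerSeries.C (R := E))).comp (C (PowerSeries.X ^ r) * X) -
        C (PowerSeries.X * aeval (PowerSeries.X ^ s) v)) :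
    ∃ A U : Polynomial (PowerSeries E),
      H = A * U ∧ A.Monic ∧ A.natDegree = a ∧
        (∀ i < a, (PowerSeries.X : PowerSeries E) ∣ A.coeff i) ∧
        (PowerSeries.X : PowerSeries E) ∣ A.coeff 0 ∧
        ¬ (PowerSeries.X : PowerSeries E) ^ 2 ∣ A.coeff 0 ∧
        A.IsEisensteinAt (Ideal.span {(PowerSeries.X : PowerSeries E)}) ∧
        Irreducible (A.map (algebraMap (PowerSeries E) (LaurentSeries E))) := by
  classical
  set c : E := u.eval 0 with hcdef
  have hc : c ≠ 0 := hu
  set hseq : ℕ → Polynomial E := fun n => PowerSeries.coeff (R := (Polynomial E)) n (phi E H)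
    with hhseq
  -- degrees of the coefficients of `phi E H` are bounded
  have hD : ∀ n, (hseq n).natDegree ≤ a + H.natDegree := by
    intro n
    rw [Polynomial.natDegree_le_iff_coeff_eq_zero]
    intro N hN
    rw [hhseq]
    simp only
    rw [phi_coeff, Polynomial.coeff_eq_zero_of_natDegree_lt (by omega), map_zero]
  -- the constant coefficient (in `z`) of `H` is `c·X^a`
  have h0 : hseq 0 = Polynomial.C c * Polynomial.X ^ a := by
    have hmap : hseq 0 = H.map (PowerSeries.constantCoeff (R := E)) := by
      apply Polynomial.ext
      intro k
      rw [hhseq]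
      simp only
      rw [phi_coeff, Polynomial.coeff_map, PowerSeries.coeff_zero_eq_constantCoeff]
    have hcomp : (PowerSeries.constantCoeff (R := E)).comp (PowerSeries.C (R := E)) = RingHom.id E :=
      RingHom.ext fun x => PowerSeries.constantCoeff_C x
    rw [hmap, hH, Polynomial.map_sub, Polynomial.map_mul, Polynomial.map_pow,
      Polynomial.map_X, Polynomial.map_comp, Polynomial.map_map, hcomp, Polynomial.map_id,
      Polynomial.map_mul, Polynomial.map_C, Polynomial.map_X, Polynomial.map_C]
    rw [show (PowerSeries.constantCoeff (R := E)) (PowerSeries.X ^ r) = 0 by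
      rw [map_pow, PowerSeries.constantCoeff_X, zero_pow hr.ne']]
    rw [show (PowerSeries.constantCoeff (R := E)) (PowerSeries.X * aeval (PowerSeries.X ^ s) v) = 0 by
      rw [map_mul, PowerSeries.constantCoeff_X, zero_mul]]
    rw [Polynomial.C_0, zero_mul, Polynomial.comp_zero, sub_zero, mul_comm]
  -- the linear (in `z`) part of the constant (in `X`) coefficient of `H` is `-v(0)`
  have h1 : (hseq 1).coeff 0 = -(v.eval 0) := by
    rw [hhseq]
    simp only
    rw [phi_coeff, hH, Polynomial.coeff_sub, Polynomial.mul_coeff_zero,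
      Polynomial.coeff_X_pow, if_neg (by omega : ¬ (0 = a)), zero_mul,
      Polynomial.coeff_C_zero, zero_sub, map_neg, neg_inj,
      show (1 : ℕ) = 0 + 1 from rfl, PowerSeries.coeff_succ_X_mul,
      PowerSeries.coeff_zero_eq_constantCoeff]
    rw [Polynomial.aeval_def, Polynomial.hom_eval₂]
    rw [show (PowerSeries.constantCoeff (R := E)).comp (algebraMap E (PowerSeries E)) = RingHom.id E
      from RingHom.ext fun x => PowerSeries.constantCoeff_C x]
    rw [map_pow, PowerSeries.constantCoeff_X, zero_pow hs.ne',
      Polynomial.eval₂_eq_eval_map, Polynomial.map_id]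
  obtain ⟨A, U, hfac, hmonic, hdeg, hlow, hc1⟩ :=
    exists_factor c a hseq hc H.natDegree ha hD h0
  have hmk : PowerSeries.mk hseq = phi E H := by
    apply PowerSeries.ext
    intro n
    rw [PowerSeries.coeff_mk]
  have hHAU : H = A * U := (phi_injective (by rw [hfac, hmk])).symm
  have hdvd : ∀ i < a, (PowerSeries.X : PowerSeries E) ∣ A.coeff i := fun i hi =>
    PowerSeries.X_dvd_iff.mpr (hlow i hi)
  have hcoeff1 : PowerSeries.coeff (R := E) 1 (A.coeff 0) = c⁻¹ * -(v.eval 0) := by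
    rw [hc1, h1]
  have hnot : ¬ (PowerSeries.X : PowerSeries E) ^ 2 ∣ A.coeff 0 := by
    intro hdvd2
    have := (PowerSeries.X_pow_dvd_iff.mp hdvd2) 1 (by omega)
    rw [hcoeff1] at this
    exact mul_ne_zero (inv_ne_zero hc) (neg_ne_zero.mpr hv) this
  have heis : A.IsEisensteinAt (Ideal.span {(PowerSeries.X : PowerSeries E)}) := by
    constructor
    · rw [hmonic.leadingCoeff]
      intro hmem
      have := PowerSeries.X_dvd_iff.mp (Ideal.mem_span_singleton.mp hmem)
      simp at this
    · intro n hn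
      rw [hdeg] at hn
      exact Ideal.mem_span_singleton.mpr (hdvd n hn)
    · rw [Ideal.span_singleton_pow, Ideal.mem_span_singleton]
      exact hnot
  have hprime : (Ideal.span {(PowerSeries.X : PowerSeries E)}).IsPrime :=
    (Ideal.span_singleton_prime PowerSeries.X_ne_zero).mpr PowerSeries.X_prime
  have hirr : Irreducible A :=
    heis.irreducible hprime hmonic.isPrimitive (by rw [hdeg]; exact ha)
  exact ⟨A, U, hHAU, hmonic, hdeg, hdvd, hdvd 0 ha, hnot, heis,
    (hmonic.irreducible_iff_irreducible_map_fraction_map).mp hirr⟩
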